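/- For a prime p, α > 0, integer r, and ε > 0 with ε ≥ p^{-r-1}: ∫_{|z|_p > ε} |z|_p^{-1}·(max(|p z^{-1}|_p, p^r)^α - p^{rα}) dz = 0. Consequently, for each compact B and each ε ≥ p^{-r-1}, lim_{t→0⁺} sup_{x∈B} P(t, x, ℚ_p ∖ B_ε(x)) = 0, where P(t,x,A) = ∫_A Z_r(x-y,t) dy. -/

import Mathlib

open MeasureTheory Filter Topology

noncomputable section

variable (p : ℕ) [Fact p.Prime]

instance : MeasurableSpace ℚ_[p] := borel _
instance : BorelSpace ℚ_[p] := ⟨rfl⟩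

/-- The closed unit ball of `ℚ_[p]` (i.e. `ℤ_p`) as a positive compact set. -/
def padicUnitBall : TopologicalSpace.PositiveCompacts ℚ_[p] where
  carrier := Metric.closedBall 0 1
  isCompact' := isCompact_closedBall 0 1
  interior_nonempty' := ⟨0, mem_interior_iff_mem_nhds.2 (Metric.closedBall_mem_nhds 0 one_pos)⟩

/-- Haar measure on `ℚ_[p]` normalized so that `ℤ_p` has measure 1. -/
def μp : Measure ℚ_[p] := Measure.addHaarMeasure (padicUnitBall p)

/-- The heat kernel `Z_r(x,t) = ∫ χ(-xξ) e^{-t(⟨ξ⟩^α - p^{rα})} dξ`, where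
`⟨ξ⟩ = max(|ξ|_p, p^r)`. -/
def heatKernel (χ : AddChar ℚ_[p] ℂ) (r : ℤ) (α t : ℝ) (x : ℚ_[p]) : ℂ :=
  ∫ ξ, χ (-(x*ξ)) *
    Complex.exp (-((t * ((max ‖ξ‖ ((p:ℝ)^r)) ^ α - (p:ℝ) ^ ((r:ℝ)*α)) : ℝ) : ℂ)) ∂(μp p)

/-- The kernel `K_α(y)`, supported on the ball `|y|_p ≤ p^{-r}`. -/
def Kfun (r : ℤ) (α : ℝ) (y : ℚ_[p]) : ℝ :=
  if ‖y‖ ≤ (p:ℝ)^(-r) then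
    (1 - (p:ℝ)^α)/(1 - (p:ℝ)^(-α-1)) * ‖y‖ ^ (-α-1)
      + (p:ℝ)^((r:ℝ)*(α+1)) * (1 - (p:ℝ)^α)/(1 - (p:ℝ)^(α+1))
  else 0

/-- `u(x,t) = ∫_{|ξ|_p ≤ 1} χ(-xξ) e^{-t(⟨ξ⟩^α - p^{rα})} dξ`, the solution with initial
datum the indicator of the unit ball. -/
def uball (χ : AddChar ℚ_[p] ℂ) (r : ℤ) (α t : ℝ) (x : ℚ_[p]) : ℂ :=
  ∫ ξ in {ξ : ℚ_[p] | ‖ξ‖ ≤ 1}, χ (-(x*ξ)) *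
    Complex.exp (-((t * ((max ‖ξ‖ ((p:ℝ)^r)) ^ α - (p:ℝ) ^ ((r:ℝ)*α)) : ℝ) : ℂ)) ∂(μp p)

/-- The survival probability `S(t) = ∫_{|x|_p ≤ 1} u(x,t) dx`. -/
def Sfun (χ : AddChar ℚ_[p] ℂ) (r : ℤ) (α t : ℝ) : ℂ :=
  ∫ x in {x : ℚ_[p] | ‖x‖ ≤ 1}, uball p χ r α t x ∂(μp p)

/-- The solution `u(x,t) = (Z_r(·,t) ∗ φ)(x)` of the Cauchy problem, with `u(x,0) = φ(x)`. -/
def sol (χ : AddChar ℚ_[p] ℂ) (r : ℤ) (α : ℝ) (φ : ℚ_[p] → ℂ) (t : ℝ) (x : ℚ_[p]) : ℂ :=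
  if t = 0 then φ x else ∫ y, heatKernel p χ r α t (x-y) * φ y ∂(μp p)

/-- The pseudodifferential operator `H^α` with symbol `⟨ξ⟩^α - p^{rα}`:
`H^α g = 𝓕⁻¹[(⟨ξ⟩^α - p^{rα}) 𝓕g]`. -/
def Hop (χ : AddChar ℚ_[p] ℂ) (r : ℤ) (α : ℝ) (g : ℚ_[p] → ℂ) (x : ℚ_[p]) : ℂ :=
  ∫ ξ, χ (-(x*ξ)) * (((max ‖ξ‖ ((p:ℝ)^r)) ^ α - (p:ℝ)^((r:ℝ)*α) : ℝ) : ℂ) *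
    (∫ y, χ (ξ*y) * g y ∂(μp p)) ∂(μp p)

/-- The Laplace transform `G_r(s)` of the density `g(t)`. -/
def Gr (χ : AddChar ℚ_[p] ℂ) (r : ℤ) (α : ℝ) (s : ℝ) : ℂ :=
  ∫ y in {y : ℚ_[p] | 1 < ‖y‖ ∧ ‖y‖ ≤ (p:ℝ)^(-r)}, (Kfun p r α y : ℂ) *
    ∫ ξ in {ξ : ℚ_[p] | ‖ξ‖ ≤ 1},
      χ (-(ξ*y)) / ((s:ℂ) + (((max ‖ξ‖ ((p:ℝ)^r)) ^ α - (p:ℝ)^((r:ℝ)*α) : ℝ) : ℂ)) ∂(μp p) ∂(μp p)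


/-!
Write `s(u) = max(u, p^r)^α - p^{rα}`, so that `Z_r(w, t) = ∫ χ(-wξ) e^{-t s(|ξ|)} dξ`.
The first integral vanishes pointwise: `|z| > ε ≥ p^{-r-1}` forces `|z| ≥ p^{-r}`, hence
`|p z⁻¹| ≤ p^r` and `s(|p z⁻¹|) = 0`.

For the second claim, translate the frequency variable by `η = (pw)⁻¹`, at which the character
`ξ ↦ χ(-wξ)` is nontrivial. The function equal to `1` on the ball `|ξ| ≤ |η|` and to
`e^{-t s(|ξ|)}` outside it is `η`-periodic, so its integral against the character vanishes, and
`Z_r(w, t) = ∫_{|ξ| ≤ p/|w|} χ(-wξ) (e^{-t s(|ξ|)} - 1) dξ`. Since `s = 0` on `|ξ| ≤ p^r`, this is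
`0` for `|w| > p^{-r}` and `O(t)` for `|w| = p^{-r}`. Every `y` with `|y - x| > ε` has
`|x - y| ≥ p^{-r}`, so `P(t, x, ℚ_p ∖ B_ε(x)) = O(t)` uniformly in `x`.
-/

open Metric

instance : (μp p).IsAddHaarMeasure := by unfold μp; infer_instance

/-- The symbol `⟨u⟩^α - q^{rα}` of `H^α` as a function of `u = |ξ|`, where `⟨u⟩ = max(u, q^r)`. -/
def heatSymbol (q : ℝ) (r : ℤ) (α u : ℝ) : ℝ := max u (q ^ r) ^ α - q ^ ((r : ℝ) * α)

section HeatSymbol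

variable {q : ℝ} {r : ℤ} {α : ℝ}

lemma heatSymbol_eq_zero (hq : 0 < q) {u : ℝ} (hu : u ≤ q ^ r) : heatSymbol q r α u = 0 := by
  rw [heatSymbol, max_eq_right hu, Real.rpow_mul hq.le, Real.rpow_intCast, sub_self]

lemma heatSymbol_nonneg (hq : 0 < q) (hα : 0 ≤ α) (u : ℝ) : 0 ≤ heatSymbol q r α u := by
  rw [heatSymbol, sub_nonneg, Real.rpow_mul hq.le, Real.rpow_intCast]
  exact Real.rpow_le_rpow (zpow_pos hq r).le (le_max_right _ _) hα

lemma heatSymbol_mono (hq : 0 < q) (hα : 0 ≤ α) : Monotone (heatSymbol q r α) := fun _ _ huv =>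
  sub_le_sub_right (Real.rpow_le_rpow ((zpow_pos hq r).le.trans (le_max_right _ _))
    (max_le_max_right _ huv) hα) _

lemma continuous_heatSymbol (hα : 0 ≤ α) : Continuous (heatSymbol q r α) :=
  ((Real.continuous_rpow_const hα).comp (continuous_id.max continuous_const)).sub continuous_const

end HeatSymbol

lemma norm_cexp_neg_sub_one_le {x : ℝ} (hx : 0 ≤ x) : ‖Complex.exp (-(x : ℂ)) - 1‖ ≤ x := by
  rw [← Complex.ofReal_neg, ← Complex.ofReal_exp, ← Complex.ofReal_one, ← Complex.ofReal_sub,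
    Complex.norm_real, Real.norm_eq_abs, abs_of_nonpos (by simpa using hx)]
  linarith [Real.add_one_le_exp (-x)]

lemma IsUltrametricDist.norm_add_eq_left {E : Type*} [SeminormedAddGroup E] [IsUltrametricDist E]
    {x y : E} (h : ‖y‖ < ‖x‖) : ‖x + y‖ = ‖x‖ := by
  rw [norm_add_eq_max_of_norm_ne_norm h.ne', max_eq_left h.le]

theorem integral_addChar_mul_eq_zero {G : Type*} [AddGroup G] [MeasurableSpace G] [MeasurableAdd G]
    (μ : Measure G) [μ.IsAddRightInvariant] (ψ : AddChar G ℂ) {g : G → ℂ} {η : G}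
    (hg : ∀ ξ, g (ξ + η) = g ξ) (hψ : ψ η ≠ 1) : ∫ ξ, ψ ξ * g ξ ∂μ = 0 := by
  have hshift : ∫ ξ, ψ ξ * g ξ ∂μ = ψ η * ∫ ξ, ψ ξ * g ξ ∂μ := by
    rw [← integral_const_mul, ← integral_add_right_eq_self _ η]
    simp only [AddChar.map_add_eq_mul, hg, mul_comm, mul_left_comm]
  have : (1 - ψ η) * ∫ ξ, ψ ξ * g ξ ∂μ = 0 := by rw [sub_mul, one_mul, ← hshift, sub_self]
  exact (mul_eq_zero.1 this).resolve_left (sub_ne_zero.2 (Ne.symm hψ))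

lemma abs_biSup_le {ι : Type*} [Nonempty ι] {B : Set ι} {g : ι → ℝ} {a : ℝ}
    (h : ∀ x, |g x| ≤ a) : |⨆ x ∈ B, g x| ≤ a := by
  have ha : 0 ≤ a := (abs_nonneg _).trans (h (Classical.arbitrary ι))
  -- off `B` the inner supremum is the junk value `sSup ∅ = 0`
  have hx : ∀ x, |⨆ _ : x ∈ B, g x| ≤ a := fun x => by
    by_cases hxB : x ∈ B
    · simpa [hxB] using h x
    · simpa [hxB] using ha
  have hbdd : BddAbove (Set.range fun x => ⨆ _ : x ∈ B, g x) :=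
    ⟨a, by rintro _ ⟨x, rfl⟩; exact (abs_le.1 (hx x)).2⟩
  refine abs_le.2 ⟨?_, ciSup_le fun x => (abs_le.1 (hx x)).2⟩
  exact (abs_le.1 (hx (Classical.arbitrary ι))).1.trans (le_ciSup hbdd _)

lemma tendsto_biSup_nhdsGT_zero {ι : Type*} [Nonempty ι] {B : Set ι} {f : ℝ → ι → ℝ} {M : ℝ}
    (h : ∀ t > 0, ∀ x, |f t x| ≤ t * M) :
    Tendsto (fun t => ⨆ x ∈ B, f t x) (𝓝[>] 0) (𝓝 0) := by
  refine squeeze_zero_norm' (a := fun t => t * M) ?_ ?_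
  · filter_upwards [self_mem_nhdsWithin] with t ht using abs_biSup_le (h t ht)
  · simpa using ((tendsto_id.mul_const M).mono_left nhdsWithin_le_nhds :
      Tendsto (fun t : ℝ => t * M) (𝓝[>] 0) (𝓝 (0 * M)))

section Padic

variable {p}

lemma one_lt_prime_cast : (1 : ℝ) < p := mod_cast (Fact.out : p.Prime).one_lt

lemma prime_cast_pos : (0 : ℝ) < p := zero_lt_one.trans one_lt_prime_cast

lemma Padic.zpow_add_one_le_norm_of_zpow_lt {z : ℚ_[p]} {n : ℤ} (h : (p : ℝ) ^ n < ‖z‖) :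
    (p : ℝ) ^ (n + 1) ≤ ‖z‖ :=
  not_lt.1 fun h' => h.not_ge ((Padic.norm_le_pow_iff_norm_lt_pow_add_one z n).2 h')

variable {χ : AddChar ℚ_[p] ℂ}

lemma norm_addChar_eq_one (hχ : ∀ y : ℚ_[p], χ y = 1 ↔ ‖y‖ ≤ 1) (y : ℚ_[p]) : ‖χ y‖ = 1 := by
  obtain ⟨n, hn⟩ := pow_unbounded_of_one_lt ‖y‖ (one_lt_prime_cast (p := p))
  refine Complex.norm_eq_one_of_pow_eq_one (n := p ^ n) ?_
    (pow_ne_zero _ (Fact.out : p.Prime).ne_zero)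
  rw [← AddChar.map_nsmul_eq_pow, hχ, nsmul_eq_mul, norm_mul, Nat.cast_pow, Padic.norm_p_pow,
    zpow_neg, zpow_natCast, inv_mul_le_one₀ (pow_pos prime_cast_pos n)]
  exact hn.le

lemma continuous_addChar (hχ : ∀ y : ℚ_[p], χ y = 1 ↔ ‖y‖ ≤ 1) : Continuous χ := by
  refine continuous_iff_continuousAt.2 fun x => EventuallyEq.continuousAt (y := χ x) ?_
  filter_upwards [closedBall_mem_nhds x one_pos] with y hy
  rw [mem_closedBall, dist_eq_norm] at hy
  rw [← sub_add_cancel y x, AddChar.map_add_eq_mul, (hχ _).2 hy, one_mul]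

theorem norm_integral_addChar_mul_radial_le (hχ : ∀ y : ℚ_[p], χ y = 1 ↔ ‖y‖ ≤ 1)
    {μ : Measure ℚ_[p]} [μ.IsAddHaarMeasure] {w : ℚ_[p]} (hw : w ≠ 0) {G : ℝ → ℂ}
    (hG : Continuous G) {C : ℝ} (hC : ∀ ξ : ℚ_[p], ‖ξ‖ ≤ p / ‖w‖ → ‖G ‖ξ‖ - 1‖ ≤ C) :
    ‖∫ ξ, χ (-(w * ξ)) * G ‖ξ‖ ∂μ‖ ≤ C * μ.real (closedBall 0 (p / ‖w‖)) := by
  set R : ℝ := p / ‖w‖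
  set η : ℚ_[p] := (p * w)⁻¹
  have hη : ‖η‖ = R := by
    rw [norm_inv, norm_mul, Padic.norm_p, mul_inv, inv_inv, ← div_eq_mul_inv]
  have hχη : χ.mulShift (-w) η ≠ 1 := by
    rw [AddChar.mulShift_apply, Ne, hχ, show -w * (p * w)⁻¹ = -(p : ℚ_[p])⁻¹ by field_simp,
      norm_neg, norm_inv, Padic.norm_p, inv_inv, not_le]
    exact one_lt_prime_cast
  let g : ℚ_[p] → ℂ := fun ξ => if ‖ξ‖ ≤ R then 1 else G ‖ξ‖
  have hg : ∀ ξ, g (ξ + η) = g ξ := by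
    intro ξ
    by_cases hξ : ‖ξ‖ ≤ R
    · have : ‖ξ + η‖ ≤ R := (IsUltrametricDist.norm_add_le_max ξ η).trans (max_le hξ hη.le)
      simp only [g, if_pos hξ, if_pos this]
    · rw [not_le, ← hη] at hξ
      simp only [g, IsUltrametricDist.norm_add_eq_left hξ]
  have hperiodic : ∫ ξ, χ (-(w * ξ)) * g ξ ∂μ = 0 := by
    simpa only [AddChar.mulShift_apply, neg_mul] using
      integral_addChar_mul_eq_zero μ (χ.mulShift (-w)) hg hχη
  set k : ℚ_[p] → ℂ := fun ξ => χ (-(w * ξ)) * (G ‖ξ‖ - 1)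
  have hk : IntegrableOn k (closedBall 0 R) μ :=
    (((continuous_addChar hχ).comp (continuous_const.mul continuous_id).neg).mul
      ((hG.comp continuous_norm).sub continuous_const)).continuousOn.integrableOn_compact
      (isCompact_closedBall 0 R)
  by_cases hint : Integrable (fun ξ => χ (-(w * ξ)) * G ‖ξ‖) μ
  · have hsplit : ∫ ξ, χ (-(w * ξ)) * G ‖ξ‖ ∂μ = ∫ ξ in closedBall 0 R, k ξ ∂μ := by
      rw [← sub_eq_zero, ← integral_indicator measurableSet_closedBall,
        ← integral_sub hint (hk.integrable_indicator measurableSet_closedBall),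
        ← hperiodic]
      congr 1 with ξ
      by_cases hξ : ‖ξ‖ ≤ R
      · simp [g, k, hξ, mul_sub]
      · simp [g, k, hξ]
    rw [hsplit]
    refine norm_setIntegral_le_of_norm_le_const measure_closedBall_lt_top fun ξ hξ => ?_
    rw [norm_mul, norm_addChar_eq_one hχ, one_mul]
    exact hC ξ (by simpa using hξ)
  · rw [integral_undef hint, norm_zero]
    exact mul_nonneg ((norm_nonneg _).trans (hC 0 (by simp [R]; positivity)))
      measureReal_nonneg

variable {r : ℤ} {α t : ℝ}

theorem norm_heatKernel_le (hχ : ∀ y : ℚ_[p], χ y = 1 ↔ ‖y‖ ≤ 1) (hα : 0 < α) (ht : 0 ≤ t)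
    {w : ℚ_[p]} (hw : w ≠ 0) :
    ‖heatKernel p χ r α t w‖ ≤
      t * heatSymbol p r α (p / ‖w‖) * (μp p).real (closedBall 0 (p / ‖w‖)) := by
  have hG := continuous_heatSymbol (q := p) (r := r) hα.le
  refine norm_integral_addChar_mul_radial_le hχ hw
    (G := fun u => Complex.exp (-((t * heatSymbol p r α u : ℝ) : ℂ))) (by fun_prop) fun ξ hξ => ?_
  calc _ ≤ t * heatSymbol p r α ‖ξ‖ :=
        norm_cexp_neg_sub_one_le (mul_nonneg ht (heatSymbol_nonneg prime_cast_pos hα.le _))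
    _ ≤ t * heatSymbol p r α (p / ‖w‖) :=
        mul_le_mul_of_nonneg_left (heatSymbol_mono prime_cast_pos hα.le hξ) ht

theorem norm_heatKernel_le_indicator (hχ : ∀ y : ℚ_[p], χ y = 1 ↔ ‖y‖ ≤ 1) (hα : 0 < α)
    (ht : 0 ≤ t) {w : ℚ_[p]} (hw : (p : ℝ) ^ (-r) ≤ ‖w‖) :
    ‖heatKernel p χ r α t w‖ ≤ (closedBall 0 ((p : ℝ) ^ (-r))).indicator
      (fun _ => t * heatSymbol p r α ((p : ℝ) ^ (r + 1)) *
        (μp p).real (closedBall 0 ((p : ℝ) ^ (r + 1)))) w := by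
  have hp : (0 : ℝ) < p := prime_cast_pos
  have hw0 : 0 < ‖w‖ := (zpow_pos hp _).trans_le hw
  refine (norm_heatKernel_le hχ hα ht (norm_pos_iff.1 hw0)).trans ?_
  by_cases hsphere : ‖w‖ ≤ (p : ℝ) ^ (-r)
  · rw [Set.indicator_of_mem (by simpa using hsphere)]
    have hR : (p : ℝ) / ‖w‖ ≤ (p : ℝ) ^ (r + 1) := by
      calc (p : ℝ) / ‖w‖ ≤ p / (p : ℝ) ^ (-r) :=
            div_le_div_of_nonneg_left hp.le (zpow_pos hp _) hw
        _ = (p : ℝ) ^ (r + 1) := by rw [zpow_neg, div_inv_eq_mul, zpow_add_one₀ hp.ne', mul_comm]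
    gcongr
    · exact mul_nonneg ht (heatSymbol_nonneg hp hα.le _)
    · exact heatSymbol_mono hp hα.le hR
    · exact measure_closedBall_lt_top.ne
  · -- no point of `ℚ_[p]` has norm strictly between `p ^ (-r)` and `p ^ (-r + 1)`
    have hfar := Padic.zpow_add_one_le_norm_of_zpow_lt (not_le.1 hsphere)
    have hR : (p : ℝ) / ‖w‖ ≤ (p : ℝ) ^ r := by
      calc (p : ℝ) / ‖w‖ ≤ p / (p : ℝ) ^ (-r + 1) :=
            div_le_div_of_nonneg_left hp.le (zpow_pos hp _) hfar
        _ = (p : ℝ) ^ r := by rw [zpow_add_one₀ hp.ne', zpow_neg]; field_simp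
    rw [Set.indicator_of_notMem (by simpa using hsphere), heatSymbol_eq_zero hp hR, mul_zero,
      zero_mul]

theorem abs_re_setIntegral_heatKernel_le (hχ : ∀ y : ℚ_[p], χ y = 1 ↔ ‖y‖ ≤ 1) (hα : 0 < α)
    {ε : ℝ} (hε : (p : ℝ) ^ (-r - 1) ≤ ε) (ht : 0 ≤ t) (x : ℚ_[p]) :
    |(∫ y in {y : ℚ_[p] | ε < ‖y - x‖}, heatKernel p χ r α t (x - y) ∂(μp p)).re| ≤
      t * (heatSymbol p r α ((p : ℝ) ^ (r + 1)) * (μp p).real (closedBall 0 ((p : ℝ) ^ (r + 1))) *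
        (μp p).real (closedBall 0 ((p : ℝ) ^ (-r)))) := by
  set K := t * heatSymbol p r α ((p : ℝ) ^ (r + 1)) * (μp p).real (closedBall 0 ((p : ℝ) ^ (r + 1)))
  have hK : 0 ≤ K :=
    mul_nonneg (mul_nonneg ht (heatSymbol_nonneg prime_cast_pos hα.le _)) measureReal_nonneg
  set F := (closedBall x ((p : ℝ) ^ (-r))).indicator fun _ => K
  have hF : Integrable F (μp p) :=
    (integrable_indicator_iff measurableSet_closedBall).2
      (integrableOn_const measure_closedBall_lt_top.ne)
  have hS : MeasurableSet {y : ℚ_[p] | ε < ‖y - x‖} :=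
    measurableSet_lt measurable_const (measurable_id.sub_const x).norm
  have hbound : ∀ y ∈ {y : ℚ_[p] | ε < ‖y - x‖}, ‖heatKernel p χ r α t (x - y)‖ ≤ F y := by
    intro y hy
    have hfar : (p : ℝ) ^ (-r) ≤ ‖x - y‖ := by
      simpa [norm_sub_rev] using Padic.zpow_add_one_le_norm_of_zpow_lt (hε.trans_lt hy)
    convert norm_heatKernel_le_indicator hχ hα ht hfar using 1
    simp [F, K, Set.indicator, dist_eq_norm, norm_sub_rev]
  calc _ ≤ ‖∫ y in {y : ℚ_[p] | ε < ‖y - x‖}, heatKernel p χ r α t (x - y) ∂(μp p)‖ :=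
        Complex.abs_re_le_norm _
    _ ≤ ∫ y in {y : ℚ_[p] | ε < ‖y - x‖}, F y ∂(μp p) :=
        norm_integral_le_of_norm_le hF.integrableOn (ae_restrict_of_forall_mem hS hbound)
    _ ≤ ∫ y, F y ∂(μp p) :=
        setIntegral_le_integral hF (Eventually.of_forall fun _ =>
          Set.indicator_nonneg (fun _ _ => hK) _)
    _ = K * (μp p).real (closedBall 0 ((p : ℝ) ^ (-r))) := by
        rw [integral_indicator_const _ measurableSet_closedBall,
          Measure.addHaar_real_closedBall_center, smul_eq_mul, mul_comm]
    _ = _ := by ring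

lemma heatSymbol_norm_p_mul_inv_eq_zero {z : ℚ_[p]} (hz : (p : ℝ) ^ (-r - 1) < ‖z‖) :
    heatSymbol p r α ‖(p : ℚ_[p]) * z⁻¹‖ = 0 := by
  have hz' : (p : ℝ) ^ (-r) ≤ ‖z‖ := by
    simpa using Padic.zpow_add_one_le_norm_of_zpow_lt hz
  refine heatSymbol_eq_zero prime_cast_pos ?_
  rw [norm_mul, Padic.norm_p, norm_inv]
  calc (p : ℝ)⁻¹ * ‖z‖⁻¹ ≤ 1 * ((p : ℝ) ^ (-r))⁻¹ := by
        gcongr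
        exacts [inv_le_one_of_one_le₀ one_lt_prime_cast.le, zpow_pos prime_cast_pos _]
    _ = (p : ℝ) ^ r := by rw [one_mul, zpow_neg, inv_inv]

end Padic

theorem stmt13 (χ : AddChar ℚ_[p] ℂ) (hχ : ∀ y : ℚ_[p], χ y = 1 ↔ ‖y‖ ≤ 1) (r : ℤ) (α : ℝ) (hα : 0 < α)
    (ε : ℝ) (hε : (p:ℝ)^(-r-1) ≤ ε) :
    (∫ z in {z : ℚ_[p] | ε < ‖z‖},
        ‖z‖⁻¹ * ((max ‖(p:ℚ_[p]) * z⁻¹‖ ((p:ℝ)^r)) ^ α - (p:ℝ)^((r:ℝ)*α)) ∂(μp p)) = 0 ∧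
    (∀ B : Set ℚ_[p], IsCompact B →
      Tendsto (fun t : ℝ => ⨆ x ∈ B,
          (∫ y in {y : ℚ_[p] | ε < ‖y - x‖}, heatKernel p χ r α t (x-y) ∂(μp p)).re)
        (𝓝[>] (0:ℝ)) (𝓝 0)) := by
  refine ⟨setIntegral_eq_zero_of_forall_eq_zero fun z hz => ?_, fun B _ => ?_⟩
  · change ‖z‖⁻¹ * heatSymbol p r α ‖(p : ℚ_[p]) * z⁻¹‖ = 0
    rw [heatSymbol_norm_p_mul_inv_eq_zero (hε.trans_lt hz), mul_zero]
  · exact tendsto_biSup_nhdsGT_zero fun t ht x =>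
      abs_re_setIntegral_heatKernel_le hχ hα hε ht.le x

end
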